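/- For every m ∈ ℤ⁺ there exist positive constants c_j (j = 0, …, m) such that ⟨2m+1, 0, 0⟩ = Σ_{j=0}^{m} c_j (−1)^{j+1} ⟨j, j, 1+2(m−j)⟩, where for u Schwartz and ρ smooth with all derivatives bounded, ⟨n, m, a⟩ := ∫_ℝ (∂_x^n u)(∂_x^m u) ρ^{(a)} dx. -/

import Mathlib

open MeasureTheory Real Set
open scoped ENNReal

noncomputable section

def mixedNorm (a : ℝ) (b : ℝ≥0∞) (T : ℝ) (u : ℝ → ℝ → ℂ) : ℝ≥0∞ :=
  (∫⁻ t in Set.Ioc (0:ℝ) T, (eLpNorm (u t) b volume) ^ a) ^ (1/a)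

def xSupNorm (T : ℝ) (u : ℝ → ℝ → ℂ) : ℝ≥0∞ :=
  essSup (fun x : ℝ => (∫⁻ t in Set.Ioc (0:ℝ) T, (‖u t x‖₊ : ℝ≥0∞) ^ (2:ℝ)) ^ (1/2 : ℝ)) volume

def hsNorm (s : ℝ) (f : ℝ → ℂ) : ℝ≥0∞ :=
  eLpNorm (fun ξ : ℝ => ((1 + ξ^2) ^ (s/2) : ℝ) • VectorFourier.fourierIntegral Real.fourierChar volume (innerₗ ℝ) f ξ) 2 volume

def InHs (s : ℝ) (f : ℝ → ℂ) : Prop :=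
  MemLp f 2 volume ∧ hsNorm s f < ⊤

def wNorm (r : ℝ) (f : ℝ → ℂ) : ℝ≥0∞ :=
  eLpNorm (fun x : ℝ => (|x| ^ r : ℝ) • f x) 2 volume

def eWNorm (b : ℝ) (f : ℝ → ℂ) : ℝ≥0∞ :=
  eLpNorm (fun x : ℝ => Real.exp (b * x) • f x) 2 volume

def Duhamel (V : ℝ → (ℝ → ℂ) → ℝ → ℂ) (T : ℝ) (u₀ : ℝ → ℂ) (u : ℝ → ℝ → ℂ) : Prop :=
  ∀ t ∈ Set.Icc (0:ℝ) T, ∀ x : ℝ,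
    u t x = V t u₀ x - ∫ t' in Set.Ioc (0:ℝ) t,
      V (t - t') (fun y => u t' y * deriv (u t') y) x

def ContHs (s T : ℝ) (u : ℝ → ℝ → ℂ) : Prop :=
  ∀ t₀ ∈ Set.Icc (0:ℝ) T, ∀ ε : ℝ, 0 < ε → ∃ δ > 0, ∀ t ∈ Set.Icc (0:ℝ) T,
    |t - t₀| < δ → hsNorm s (fun x => u t x - u t₀ x) < ENNReal.ofReal ε

def ContW (r T : ℝ) (u : ℝ → ℝ → ℂ) : Prop :=
  ∀ t₀ ∈ Set.Icc (0:ℝ) T, ∀ ε : ℝ, 0 < ε → ∃ δ > 0, ∀ t ∈ Set.Icc (0:ℝ) T,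
    |t - t₀| < δ → wNorm r (fun x => u t x - u t₀ x) < ENNReal.ofReal ε

def ContE (b T : ℝ) (u : ℝ → ℝ → ℂ) : Prop :=
  ∀ t₀ ∈ Set.Icc (0:ℝ) T, ∀ ε : ℝ, 0 < ε → ∃ δ > 0, ∀ t ∈ Set.Icc (0:ℝ) T,
    |t - t₀| < δ → eWNorm b (fun x => u t x - u t₀ x) < ENNReal.ofReal ε

def classNorm (Ds : ℝ → (ℝ → ℂ) → ℝ → ℂ) (s T : ℝ) (u : ℝ → ℝ → ℂ) : ℝ≥0∞ :=
  mixedNorm 2 (ENNReal.ofReal 4) T (fun t => Ds s (deriv (u t)))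
  + mixedNorm 2 (ENNReal.ofReal 4) T (fun t => deriv (u t))
  + mixedNorm 2 (ENNReal.ofReal 4) T u
  + mixedNorm 2 (ENNReal.ofReal 4) T (fun t => Ds s (u t))

end

noncomputable def bracket (u ρ : ℝ → ℝ) (n m a : ℕ) : ℝ :=
  ∫ x : ℝ, iteratedDeriv n u x * iteratedDeriv m u x * iteratedDeriv a ρ x


noncomputable def betaC : ℕ → ℕ → ℝ
  | 0, 0 => 1
  | 0, _ + 1 => 0
  | 1, 0 => 1/2
  | 1, _ + 1 => 0
  | d + 2, 0 => betaC (d + 1) 0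
  | d + 2, j + 1 => betaC (d + 1) (j + 1) + betaC d j

lemma betaC_nonneg : ∀ d j, 0 ≤ betaC d j := by
  intro d
  induction d using Nat.twoStepInduction with
  | zero => intro j; cases j <;> norm_num [betaC]
  | one => intro j; cases j <;> norm_num [betaC]
  | more d ih ih1 =>
    intro j
    cases j with
    | zero => simpa only [betaC] using ih1 0
    | succ j => simp only [betaC]; exact add_nonneg (ih1 (j+1)) (ih j)

lemma betaC_pos : ∀ d j, 2 * j ≤ d → 0 < betaC d j := by
  intro d
  induction d using Nat.twoStepInduction with
  | zero => intro j h; have : j = 0 := by omega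
            subst this; norm_num [betaC]
  | one => intro j h; have : j = 0 := by omega
           subst this; norm_num [betaC]
  | more d ih ih1 =>
    intro j h
    cases j with
    | zero => simpa only [betaC] using ih1 0 (by omega)
    | succ j =>
      simp only [betaC]
      have h1 := ih j (by omega)
      have h2 := betaC_nonneg (d+1) (j+1)
      linarith

lemma betaC_eq_zero : ∀ d j, d < 2 * j → betaC d j = 0 := by
  intro d
  induction d using Nat.twoStepInduction with
  | zero => intro j h; have : ∃ k, j = k + 1 := ⟨j - 1, by omega⟩
            obtain ⟨k, rfl⟩ := this; norm_num [betaC]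
  | one => intro j h; have : ∃ k, j = k + 1 := ⟨j - 1, by omega⟩
           obtain ⟨k, rfl⟩ := this; norm_num [betaC]
  | more d ih ih1 =>
    intro j h
    cases j with
    | zero => omega
    | succ j =>
      simp only [betaC]
      rw [ih j (by omega), ih1 (j+1) (by omega), add_zero]

noncomputable def sIter : ℕ → SchwartzMap ℝ ℝ → SchwartzMap ℝ ℝ
  | 0, u => u
  | n + 1, u => SchwartzMap.derivCLM ℝ ℝ (sIter n u)

lemma sIter_apply (n : ℕ) (u : SchwartzMap ℝ ℝ) : ⇑(sIter n u) = iteratedDeriv n ⇑u := by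
  induction n with
  | zero => simp [sIter, iteratedDeriv_zero]
  | succ n ih =>
    funext x
    rw [iteratedDeriv_succ, ← ih]
    simp [sIter, SchwartzMap.derivCLM_apply]

lemma schwartz_bdd (f : SchwartzMap ℝ ℝ) : ∃ C, ∀ x, ‖f x‖ ≤ C := by
  obtain ⟨C, -, hC⟩ := f.decay 0 0
  exact ⟨C, fun x => by simpa [norm_iteratedFDeriv_zero] using hC x⟩

lemma rho_smooth {ρ : ℝ → ℝ} (hρ : ContDiff ℝ (⊤ : ℕ∞) ρ) (a : ℕ) :
    ContDiff ℝ (⊤:ℕ∞) (iteratedDeriv a ρ) := by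
  rw [iteratedDeriv_eq_iterate]; exact ContDiff.iterate_deriv a (hρ.of_le (by simp))

lemma bracket_integrable (u : SchwartzMap ℝ ℝ) {ρ : ℝ → ℝ} (hρ : ContDiff ℝ (⊤ : ℕ∞) ρ)
    (hb : ∀ i : ℕ, ∃ C : ℝ, ∀ x : ℝ, |iteratedDeriv i ρ x| ≤ C) (n m a : ℕ) :
    Integrable (fun x => iteratedDeriv n (⇑u) x * iteratedDeriv m (⇑u) x * iteratedDeriv a ρ x)
      volume := by
  have h1 : Integrable (fun x => iteratedDeriv n (⇑u) x * iteratedDeriv m (⇑u) x) volume := by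
    have := ((sIter m u).integrable (μ := volume)).bdd_mul
      (sIter n u).continuous.aestronglyMeasurable (ae_of_all _ (schwartz_bdd (sIter n u)).choose_spec)
    simpa [sIter_apply] using this
  obtain ⟨C, hC⟩ := hb a
  have h2 : Integrable
      (fun x => iteratedDeriv a ρ x * (iteratedDeriv n (⇑u) x * iteratedDeriv m (⇑u) x)) volume :=
    h1.bdd_mul (rho_smooth hρ a).continuous.aestronglyMeasurable
      (ae_of_all _ fun x => by simpa [Real.norm_eq_abs] using hC x)
  exact h2.congr (ae_of_all _ fun x => by ring)

lemma bracket_symm (u ρ : ℝ → ℝ) (n m a : ℕ) : bracket u ρ n m a = bracket u ρ m n a := by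
  unfold bracket
  congr 1
  funext x
  ring

lemma bracket_ibp (u : SchwartzMap ℝ ℝ) {ρ : ℝ → ℝ} (hρ : ContDiff ℝ (⊤ : ℕ∞) ρ)
    (hb : ∀ i : ℕ, ∃ C : ℝ, ∀ x : ℝ, |iteratedDeriv i ρ x| ≤ C) (n m a : ℕ) :
    bracket (⇑u) ρ (n+1) m a = -bracket (⇑u) ρ n (m+1) a - bracket (⇑u) ρ n m (a+1) := by
  have hu : ∀ k, Differentiable ℝ (iteratedDeriv k (⇑u)) := by
    intro k
    have := ((sIter k u).smooth ⊤).differentiable (by simp)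
    rwa [sIter_apply] at this
  have hρd : ∀ k, Differentiable ℝ (iteratedDeriv k ρ) := fun k =>
    (rho_smooth hρ k).differentiable (by simp)
  set F := fun x => iteratedDeriv n (⇑u) x * iteratedDeriv m (⇑u) x * iteratedDeriv a ρ x with hF
  set G := fun x => iteratedDeriv (n+1) (⇑u) x * iteratedDeriv m (⇑u) x * iteratedDeriv a ρ x
    + iteratedDeriv n (⇑u) x * iteratedDeriv (m+1) (⇑u) x * iteratedDeriv a ρ x
    + iteratedDeriv n (⇑u) x * iteratedDeriv m (⇑u) x * iteratedDeriv (a+1) ρ x with hG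
  have hderiv : ∀ x, HasDerivAt F (G x) x := by
    intro x
    have h1 : HasDerivAt (iteratedDeriv n (⇑u)) (iteratedDeriv (n+1) (⇑u) x) x := by
      rw [iteratedDeriv_succ]; exact ((hu n) x).hasDerivAt
    have h2 : HasDerivAt (iteratedDeriv m (⇑u)) (iteratedDeriv (m+1) (⇑u) x) x := by
      rw [iteratedDeriv_succ]; exact ((hu m) x).hasDerivAt
    have h3 : HasDerivAt (iteratedDeriv a ρ) (iteratedDeriv (a+1) ρ x) x := by
      rw [iteratedDeriv_succ]; exact ((hρd a) x).hasDerivAt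
    have := (h1.mul h2).mul h3
    refine HasDerivAt.congr_deriv this ?_
    simp only [hG, Pi.mul_apply]
    ring
  have hI1 := bracket_integrable u hρ hb (n+1) m a
  have hI2 := bracket_integrable u hρ hb n (m+1) a
  have hI3 := bracket_integrable u hρ hb n m (a+1)
  have hFint : Integrable F volume := bracket_integrable u hρ hb n m a
  have hGint : Integrable G volume := (hI1.add hI2).add hI3
  have h0 : ∫ x, G x = 0 :=
    integral_eq_zero_of_hasDerivAt_of_integrable hderiv hGint hFint
  have hsplit : ∫ x, G x = bracket (⇑u) ρ (n+1) m a + bracket (⇑u) ρ n (m+1) a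
      + bracket (⇑u) ρ n m (a+1) := by
    simp only [hG, bracket]
    have e2 := integral_add (μ := volume) (hI1.add hI2) hI3
    simp only [Pi.add_apply] at e2
    rw [e2, integral_add hI1 hI2]
  rw [h0] at hsplit
  linarith

lemma bracket_ibp2 (u : SchwartzMap ℝ ℝ) {ρ : ℝ → ℝ} (hρ : ContDiff ℝ (⊤ : ℕ∞) ρ)
    (hb : ∀ i : ℕ, ∃ C : ℝ, ∀ x : ℝ, |iteratedDeriv i ρ x| ≤ C) (q a : ℕ) :
    bracket (⇑u) ρ (q+1) q a = -(1/2) * bracket (⇑u) ρ q q (a+1) := by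
  have h := bracket_ibp u hρ hb q q a
  rw [bracket_symm (⇑u) ρ q (q+1) a] at h
  linarith

lemma sum_step (F G H : ℕ → ℝ) (d : ℕ)
    (h0 : H 0 = -(G 0)) (hF : F (d+1) = 0) (hG : G (d+1+1) = 0)
    (key : ∀ j, H (j+1) = -(F j) - G (j+1)) :
    -(∑ j ∈ Finset.range (d+1), F j) - (∑ j ∈ Finset.range (d+1+1), G j)
      = ∑ j ∈ Finset.range (d+2+1), H j := by
  have e1 : ∑ j ∈ Finset.range (d+2+1), H j
      = (∑ j ∈ Finset.range (d+2), H (j+1)) + H 0 := Finset.sum_range_succ' H (d+2)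
  have e2 : ∑ j ∈ Finset.range (d+1+1), G j
      = (∑ j ∈ Finset.range (d+1), G (j+1)) + G 0 := Finset.sum_range_succ' G (d+1)
  have e3 : ∑ j ∈ Finset.range (d+2), H (j+1)
      = ∑ j ∈ Finset.range (d+2), (-(F j) - G (j+1)) :=
    Finset.sum_congr rfl (fun j _ => key j)
  have e4 : ∑ j ∈ Finset.range (d+2), (-(F j) - G (j+1))
      = -(∑ j ∈ Finset.range (d+2), F j) - ∑ j ∈ Finset.range (d+2), G (j+1) := by
    rw [Finset.sum_sub_distrib, Finset.sum_neg_distrib]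
  have e5 : ∑ j ∈ Finset.range (d+2), F j
      = (∑ j ∈ Finset.range (d+1), F j) + F (d+1) := by
    rw [show d + 2 = d + 1 + 1 by omega]
    exact Finset.sum_range_succ F (d+1)
  have e6 : ∑ j ∈ Finset.range (d+2), G (j+1)
      = (∑ j ∈ Finset.range (d+1), G (j+1)) + G (d+1+1) := by
    rw [show d + 2 = d + 1 + 1 by omega]
    exact Finset.sum_range_succ (fun j => G (j+1)) (d+1)
  rw [e1, e3, e4, e5, e6, e2, hF, hG, h0]
  ring

lemma step_sum (B : ℕ → ℕ → ℝ) (d q a : ℕ) :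
    -(∑ j ∈ Finset.range (d+1), (-1:ℝ)^(d+j) * betaC d j * B (q+1+j) (a + (d - 2*j)))
      - ∑ j ∈ Finset.range (d+1+1), (-1:ℝ)^(d+1+j) * betaC (d+1) j * B (q+j) (a+1 + (d+1 - 2*j))
    = ∑ j ∈ Finset.range (d+2+1), (-1:ℝ)^(d+2+j) * betaC (d+2) j * B (q+j) (a + (d+2 - 2*j)) := by
  refine sum_step
    (fun j => (-1:ℝ)^(d+j) * betaC d j * B (q+1+j) (a + (d - 2*j)))
    (fun j => (-1:ℝ)^(d+1+j) * betaC (d+1) j * B (q+j) (a+1 + (d+1 - 2*j)))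
    (fun j => (-1:ℝ)^(d+2+j) * betaC (d+2) j * B (q+j) (a + (d+2 - 2*j)))
    d ?_ ?_ ?_ ?_
  · have hb : betaC (d+2) 0 = betaC (d+1) 0 := by simp [betaC]
    have ha : a + (d + 2 - 2*0) = a + 1 + (d + 1 - 2*0) := by omega
    have hs : (-1:ℝ)^(d+2+0) = -(-1:ℝ)^(d+1+0) := by
      rw [show d+2+0 = (d+1+0)+1 by omega, pow_succ]; ring
    simp only [hb, ha, hs]
    ring
  · have hz : betaC d (d+1) = 0 := betaC_eq_zero d (d+1) (by omega)
    simp [hz]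
  · have hz : betaC (d+1) (d+1+1) = 0 := betaC_eq_zero (d+1) (d+1+1) (by omega)
    simp [hz]
  · intro j
    have hb : betaC (d+2) (j+1) = betaC (d+1) (j+1) + betaC d j := by simp [betaC]
    have ha : a + (d + 2 - 2*(j+1)) = a + (d - 2*j) := by omega
    have hs1 : (-1:ℝ)^(d+2+(j+1)) = -(-1:ℝ)^(d+j) := by
      rw [show d+2+(j+1) = (d+j)+3 by omega, pow_add]; norm_num
    have hs2 : (-1:ℝ)^(d+1+(j+1)) = (-1:ℝ)^(d+j) := by
      rw [show d+1+(j+1) = (d+j)+2 by omega, pow_add]; norm_num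
    by_cases hj : 2*j + 1 ≤ d
    · have ha2 : a + 1 + (d + 1 - 2*(j+1)) = a + (d - 2*j) := by omega
      simp only [hb, ha, ha2, hs1, hs2]
      ring
    · have hb1 : betaC (d+1) (j+1) = 0 := betaC_eq_zero (d+1) (j+1) (by omega)
      simp only [hb, hb1, ha, hs1, hs2]
      ring

lemma bracket_expand (u : SchwartzMap ℝ ℝ) {ρ : ℝ → ℝ} (hρ : ContDiff ℝ (⊤ : ℕ∞) ρ)
    (hb : ∀ i : ℕ, ∃ C : ℝ, ∀ x : ℝ, |iteratedDeriv i ρ x| ≤ C) :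
    ∀ d q a : ℕ, bracket (⇑u) ρ (q + d) q a
      = ∑ j ∈ Finset.range (d + 1),
          (-1:ℝ)^(d+j) * betaC d j * bracket (⇑u) ρ (q+j) (q+j) (a + (d - 2*j)) := by
  intro d
  induction d using Nat.twoStepInduction with
  | zero => intro q a; simp [betaC]
  | one =>
    intro q a
    rw [bracket_ibp2 u hρ hb q a, Finset.sum_range_succ, Finset.sum_range_one]
    norm_num [betaC]
  | more d ihd ihd1 =>
    intro q a
    rw [show q + (d+2) = (q + d + 1) + 1 by omega, bracket_ibp u hρ hb (q+d+1) q a,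
      show q + d + 1 = q + 1 + d by omega, ihd (q+1) a,
      show q + 1 + d = q + (d+1) by omega, ihd1 q (a+1)]
    exact step_sum (fun r s => bracket (⇑u) ρ r r s) d q a

theorem bracket_odd
    (m : ℕ) (hm : 1 ≤ m) :
    ∃ c : ℕ → ℝ, (∀ j : ℕ, j ≤ m → 0 < c j) ∧
      ∀ u : SchwartzMap ℝ ℝ, ∀ ρ : ℝ → ℝ, ContDiff ℝ (⊤ : ℕ∞) ρ →
        (∀ i : ℕ, ∃ C : ℝ, ∀ x : ℝ, |iteratedDeriv i ρ x| ≤ C) →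
        bracket (⇑u) ρ (2 * m + 1) 0 0
          = ∑ j ∈ Finset.range (m + 1),
              c j * (-1 : ℝ) ^ (j + 1) * bracket (⇑u) ρ j j (1 + 2 * (m - j)) := by
  refine ⟨fun j => betaC (2*m+1) j, fun j hj => betaC_pos _ _ (by omega), ?_⟩
  intro u ρ hρ hb
  have h := bracket_expand u hρ hb (2*m+1) 0 0
  rw [zero_add] at h
  rw [h]
  have h2 : ∀ j ∈ Finset.range (m+1),
      betaC (2*m+1) j * (-1:ℝ)^(j+1) * bracket (⇑u) ρ j j (1 + 2*(m - j))
      = (-1:ℝ)^(2*m+1+j) * betaC (2*m+1) j * bracket (⇑u) ρ (0+j) (0+j) (0 + (2*m+1 - 2*j)) := by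
    intro j hj
    have hj' : j ≤ m := by have := Finset.mem_range.mp hj; omega
    have e1 : (0:ℕ) + j = j := by omega
    have e2 : 0 + (2*m+1 - 2*j) = 1 + 2*(m - j) := by omega
    have e3 : (-1:ℝ)^(2*m+1+j) = (-1:ℝ)^(j+1) := by
      rw [show 2*m+1+j = 2*m + (j+1) by omega, pow_add, pow_mul]
      norm_num
    rw [e1, e2, e3]
    ring
  rw [Finset.sum_congr rfl h2]
  refine (Finset.sum_subset (Finset.range_subset_range.mpr (by omega : m+1 ≤ 2*m+1+1)) ?_).symm
  intro j hj hj'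
  have hz : betaC (2*m+1) j = 0 := by
    apply betaC_eq_zero
    have h1 := Finset.mem_range.mp hj
    have h2 : ¬ j < m + 1 := fun hc => hj' (Finset.mem_range.mpr hc)
    omega
  simp [hz]
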